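/- Let n ≥ 2 be an integer and let G be the subgroup of GL(3,ℂ) generated by E, I and L_n (the group Δ(6n²)). Then the number of group homomorphisms from G to ℂˣ (equivalently, the number of inequivalent one-dimensional complex irreducible representations of G) is 2. -/

import Mathlib

open Matrix

/-- The matrix `E` with entries `E₀₁ = E₁₂ = E₂₀ = 1` and all other entries `0`. -/
noncomputable def Ematrix : Matrix (Fin 3) (Fin 3) ℂ := !![0, 1, 0; 0, 0, 1; 1, 0, 0]

/-- The matrix `I` with entries `I₀₂ = I₁₁ = I₂₀ = −1` and all other entries `0`. -/
noncomputable def Imatrix : Matrix (Fin 3) (Fin 3) ℂ := !![0, 0, -1; 0, -1, 0; -1, 0, 0]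

/-- The matrix `L_n = diag(1, ν, ν⁻¹)` with `ν = exp(2πi/n)`. -/
noncomputable def Lmatrix (n : ℕ) : Matrix (Fin 3) (Fin 3) ℂ :=
  Matrix.diagonal ![1, Complex.exp (2 * (Real.pi : ℂ) * Complex.I / (n : ℂ)),
    (Complex.exp (2 * (Real.pi : ℂ) * Complex.I / (n : ℂ)))⁻¹]

/-!
A character `φ` of `Δ(6n²)` kills `E`, because `I² = 1` and `I E I = E²`; it then kills `L`,
because `L · E⁻¹ L E = I L I` (with `E⁻¹ = E²`). So `φ` is determined by `φ(I) = ±1`.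
The value `-1` is attained: all three generators are monomial matrices, and the sign of the
underlying permutation is a character which is `-1` on the transposition matrix `I`.
-/

open Equiv

namespace Matrix

variable {n R : Type*} [Fintype n] [DecidableEq n] [Semiring R]

lemma permMatrix_mul_diagonal (σ : Perm n) (d : n → R) :
    σ.permMatrix R * diagonal d = diagonal (d ∘ σ) * σ.permMatrix R := by
  rw [PEquiv.toMatrix_toPEquiv_mul, PEquiv.mul_toMatrix_toPEquiv]
  ext i j
  simp [diagonal_apply, Equiv.eq_symm_apply, eq_comm]

def monomialMatrix (d : n → Rˣ) (σ : Perm n) : Matrix n n R :=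
  diagonal (fun i => (d i : R)) * (σ⁻¹).permMatrix R

lemma monomialMatrix_apply (d : n → Rˣ) (σ : Perm n) (i j : n) :
    monomialMatrix d σ i j = if i = σ j then (d i : R) else 0 := by
  simp [monomialMatrix, Equiv.Perm.inv_def, Equiv.eq_symm_apply, eq_comm]

@[simp]
lemma monomialMatrix_one : monomialMatrix (1 : n → Rˣ) 1 = 1 := by
  simp [monomialMatrix]

lemma monomialMatrix_mul_monomialMatrix (d e : n → Rˣ) (σ τ : Perm n) :
    monomialMatrix d σ * monomialMatrix e τ = monomialMatrix (d * e ∘ ⇑σ⁻¹) (σ * τ) := by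
  simp only [monomialMatrix, Matrix.mul_assoc]
  rw [← Matrix.mul_assoc ((σ⁻¹).permMatrix R), permMatrix_mul_diagonal, Matrix.mul_assoc,
    ← Matrix.mul_assoc, diagonal_mul_diagonal, _root_.mul_inv_rev, permMatrix_mul]
  rfl

lemma monomialMatrix_injective_perm [Nontrivial R] {d e : n → Rˣ} {σ τ : Perm n}
    (h : monomialMatrix d σ = monomialMatrix e τ) : σ = τ := by
  ext j
  by_contra hne
  have := congr_fun₂ h (σ j) j
  simp [monomialMatrix_apply, hne] at this

variable (n R) in
def monomialSubgroup : Subgroup (GL n R) where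
  carrier := {g | ∃ σ d, (g : Matrix n n R) = monomialMatrix d σ}
  mul_mem' := by
    rintro _ _ ⟨σ, d, hg⟩ ⟨τ, e, hh⟩
    exact ⟨σ * τ, _, by rw [Units.val_mul, hg, hh, monomialMatrix_mul_monomialMatrix]⟩
  one_mem' := ⟨1, 1, monomialMatrix_one.symm⟩
  inv_mem' := by
    rintro g ⟨σ, d, hg⟩
    refine ⟨σ⁻¹, d⁻¹ ∘ σ, Units.inv_eq_of_mul_eq_one_right ?_⟩
    rw [hg, monomialMatrix_mul_monomialMatrix, mul_inv_cancel, ← monomialMatrix_one]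
    congr
    ext i
    simp

namespace monomialSubgroup

variable [Nontrivial R]

noncomputable def perm : monomialSubgroup n R →* Perm n where
  toFun g := g.2.choose
  map_one' := monomialMatrix_injective_perm <|
    (one_mem (monomialSubgroup n R)).choose_spec.choose_spec.symm.trans monomialMatrix_one.symm
  map_mul' g h := monomialMatrix_injective_perm <|
    (g * h).2.choose_spec.choose_spec.symm.trans <|
      (congr_arg₂ (· * ·) g.2.choose_spec.choose_spec h.2.choose_spec.choose_spec).trans
        (monomialMatrix_mul_monomialMatrix _ _ _ _)

lemma perm_apply_of_eq {g : monomialSubgroup n R} {d : n → Rˣ} {σ : Perm n}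
    (h : ((g : GL n R) : Matrix n n R) = monomialMatrix d σ) : perm g = σ :=
  monomialMatrix_injective_perm (g.2.choose_spec.choose_spec.symm.trans h)

end monomialSubgroup

end Matrix

section Characters

variable {G M : Type*} [Group G] [CommGroup M] {E I L : G}

lemma MonoidHom.map_eq_one_of_conj_eq_sq (φ : G →* M) (hI : I * I = 1)
    (hIE : I * E * I = E * E) : φ E = 1 := by
  refine mul_eq_left.1 (?_ : φ E * φ E = φ E)
  calc φ E * φ E = φ (I * E * I) := by rw [hIE, map_mul]
    _ = φ (I * I) * φ E := by simp only [map_mul]; exact mul_right_comm _ _ _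
    _ = φ E := by rw [hI, map_one, one_mul]

lemma MonoidHom.map_eq_one_of_mul_conj_eq_conj (φ : G →* M) (hI : I * I = 1) (hE : φ E = 1)
    (hIL : L * (E * E * L * E) = I * L * I) : φ L = 1 := by
  refine mul_eq_left.1 (?_ : φ L * φ L = φ L)
  calc φ L * φ L = φ (L * (E * E * L * E)) := by simp only [map_mul, hE, mul_one, one_mul]
    _ = φ (I * I) * φ L := by rw [hIL]; simp only [map_mul]; exact mul_right_comm _ _ _
    _ = φ L := by rw [hI, map_one, one_mul]

lemma MonoidHom.eq_of_map_eq_of_relations {φ χ : G →* M}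
    (hgen : Subgroup.closure {E, I, L} = ⊤) (hI : I * I = 1) (hIE : I * E * I = E * E)
    (hIL : L * (E * E * L * E) = I * L * I) (h : φ I = χ I) : φ = χ := by
  have hE (φ : G →* M) := φ.map_eq_one_of_conj_eq_sq hI hIE
  have hL (φ : G →* M) := φ.map_eq_one_of_mul_conj_eq_conj hI (hE φ) hIL
  refine MonoidHom.eq_of_eqOn_dense hgen ?_
  rintro _ (rfl | rfl | rfl)
  exacts [(hE φ).trans (hE χ).symm, h, (hL φ).trans (hL χ).symm]

theorem card_hom_units_eq_two_of_relations {K : Type*} [CommRing K] [IsDomain K]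
    (hgen : Subgroup.closure {E, I, L} = ⊤) (hI : I * I = 1) (hIE : I * E * I = E * E)
    (hIL : L * (E * E * L * E) = I * L * I) (ψ : G →* Kˣ) (hψ : ψ ≠ 1) :
    Nat.card (G →* Kˣ) = 2 := by
  have hext {φ χ : G →* Kˣ} : φ I = χ I → φ = χ :=
    MonoidHom.eq_of_map_eq_of_relations hgen hI hIE hIL
  have hsq (φ : G →* Kˣ) : φ I = 1 ∨ φ I = -1 := by
    have : (φ I : K) * φ I = 1 := by rw [← Units.val_mul, ← map_mul, hI, map_one, Units.val_one]
    rcases mul_self_eq_one_iff.1 this with h | h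
    exacts [Or.inl (Units.ext h), Or.inr (Units.ext h)]
  have hψI : ψ I = -1 := (hsq ψ).resolve_left fun h => hψ (hext h)
  rw [Nat.card_eq_two_iff]
  refine ⟨1, ψ, hψ.symm, Set.eq_univ_of_forall fun φ => ?_⟩
  rcases hsq φ with h | h
  · exact Or.inl (hext h)
  · exact Or.inr (hext (h.trans hψI.symm))

end Characters

lemma Imatrix_mul_self : Imatrix * Imatrix = 1 := by
  rw [Imatrix, Matrix.one_fin_three]
  norm_num [Matrix.mul_fin_three]

lemma Imatrix_mul_Ematrix_mul_Imatrix : Imatrix * Ematrix * Imatrix = Ematrix * Ematrix := by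
  rw [Imatrix, Ematrix]
  norm_num [Matrix.mul_fin_three]

lemma Lmatrix_mul_conj_eq_conj (n : ℕ) :
    Lmatrix n * (Ematrix * Ematrix * Lmatrix n * Ematrix) = Imatrix * Lmatrix n * Imatrix := by
  have hν := Complex.exp_ne_zero (2 * Real.pi * Complex.I / n)
  rw [Lmatrix, Imatrix, Ematrix, Matrix.diagonal_fin_three]
  norm_num [Matrix.mul_fin_three, Matrix.cons_val_two, Matrix.tail_cons, hν]

lemma Ematrix_eq_monomialMatrix : Ematrix = monomialMatrix 1 (finRotate 3)⁻¹ := by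
  ext i j
  fin_cases i <;> fin_cases j <;> simp [Ematrix, monomialMatrix_apply] <;> decide

lemma Imatrix_eq_monomialMatrix : Imatrix = monomialMatrix (-1) (swap 0 2) := by
  ext i j
  fin_cases i <;> fin_cases j <;> simp [Imatrix, monomialMatrix_apply, swap_apply_def]

lemma Lmatrix_eq_monomialMatrix (n : ℕ) : ∃ d : Fin 3 → ℂˣ, Lmatrix n = monomialMatrix d 1 := by
  set ν := Units.mk0 _ (Complex.exp_ne_zero (2 * Real.pi * Complex.I / n))
  refine ⟨![1, ν, ν⁻¹], ?_⟩
  rw [Lmatrix, monomialMatrix, inv_one, Matrix.permMatrix_one, Matrix.mul_one]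
  congr
  ext i
  fin_cases i <;> simp [ν]

theorem delta_6n2_singlets_general (n : ℕ) (E I L : GL (Fin 3) ℂ)
    (hE : E.val = Ematrix) (hI : I.val = Imatrix) (hL : L.val = Lmatrix n) :
    Nat.card (↥(Subgroup.closure ({E, I, L} : Set (GL (Fin 3) ℂ))) →* ℂˣ) = 2 := by
  set W := Subgroup.closure ({E, I, L} : Set (GL (Fin 3) ℂ))
  have hEW : E ∈ W := Subgroup.subset_closure (by simp)
  have hIW : I ∈ W := Subgroup.subset_closure (by simp)
  have hLW : L ∈ W := Subgroup.subset_closure (by simp)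
  have hmono : W ≤ monomialSubgroup (Fin 3) ℂ := by
    refine (Subgroup.closure_le _).2 ?_
    rintro _ (rfl | rfl | rfl)
    · exact ⟨_, _, hE.trans Ematrix_eq_monomialMatrix⟩
    · exact ⟨_, _, hI.trans Imatrix_eq_monomialMatrix⟩
    · obtain ⟨d, hd⟩ := Lmatrix_eq_monomialMatrix n
      exact ⟨_, _, hL.trans hd⟩
  let ψ : W →* ℂˣ := (Units.map (Int.castRingHom ℂ : ℤ →* ℂ)).comp
    (Perm.sign.comp (monomialSubgroup.perm.comp (Subgroup.inclusion hmono)))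
  have hψI : ψ ⟨I, hIW⟩ = -1 := by
    have : monomialSubgroup.perm (Subgroup.inclusion hmono ⟨I, hIW⟩) = swap 0 2 :=
      monomialSubgroup.perm_apply_of_eq (hI.trans Imatrix_eq_monomialMatrix)
    simp [ψ, this]
  refine card_hom_units_eq_two_of_relations (E := ⟨E, hEW⟩) (I := ⟨I, hIW⟩) (L := ⟨L, hLW⟩) ?_
    (Subtype.ext (Units.ext ?_)) (Subtype.ext (Units.ext ?_)) (Subtype.ext (Units.ext ?_)) ψ
    fun h => by
      rw [h, MonoidHom.one_apply, ← Units.val_inj] at hψI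
      norm_num at hψI
  · convert Subgroup.closure_closure_coe_preimage using 2
    ext ⟨x, hx⟩
    simp
  · simp [hI, Imatrix_mul_self]
  · simp [hI, hE, Imatrix_mul_Ematrix_mul_Imatrix]
  · simp [hI, hE, hL, Lmatrix_mul_conj_eq_conj]

/-- The group `Δ(6n²)`, generated by `E`, `I` and `L_n` inside `GL(3,ℂ)`, has exactly `2`
one-dimensional irreducible representations, i.e. homomorphisms into `ℂˣ`. -/
theorem delta_6n2_singlets (n : ℕ) (hn : 2 ≤ n) (E I L : GL (Fin 3) ℂ)
    (hE : E.val = Ematrix) (hI : I.val = Imatrix) (hL : L.val = Lmatrix n) :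
    Nat.card (↥(Subgroup.closure ({E, I, L} : Set (GL (Fin 3) ℂ))) →* ℂˣ) = 2 :=
  delta_6n2_singlets_general n E I L hE hI hL
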